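/- arXiv:2605.00407 — 4 statements merged into one kernel-verified Lean document; each statement's English description precedes it below -/
import Mathlib

section
/- Let γ ∈ (1,3), μ ∈ [1/2,1), and i ≥ 2, and set g_i = μ + i - 1 - (3-γ)iμ/(γ+1), k_i = i - 1 - iμ. For any nonnegative integers ℓ₂,…,ℓ_{i-1} with Σ_{m=2}^{i-1} ℓ_m(m-1) = i-1, the following nonresonance relations hold: g_i - Σ ℓ_m g_m = μ·(2(γ-1)/(γ+1))·(1 - Σ ℓ_m) ≠ 0 and k_i - Σ ℓ_m g_m = -μ - (2(γ-1)/(γ+1))·μ·Σ m·ℓ_m ≠ 0, and moreover g_i - Σ ℓ_m g_m < 0 (i.e., Σ ℓ_m ≥ 2 whenever the constraint holds with i ≥ 3 and some ℓ_m > 0). -/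
/-!
Write `S = ∑ ℓ_m` and `T = ∑ m ℓ_m`; the constraint says `T = S + (i - 1)`. Since `g` and `k` are
affine in `m`, both differences are affine in `S` and `T`, and eliminating `T` gives the closed
forms. As every `m` in the range has `m - 1 ≤ i - 2`, `S ≤ 1` would force `∑ ℓ_m (m - 1) ≤ i - 2`;
hence `S ≥ 2`, which makes `1 - S` negative, while the second closed form is negative since `T ≥ 0`.
-/

open Finset

theorem sum_mul_add_mul {ι R : Type*} [CommSemiring R] (s : Finset ι) (w x : ι → R) (a b : R) :
    ∑ j ∈ s, w j * (a + b * x j) = a * ∑ j ∈ s, w j + b * ∑ j ∈ s, x j * w j := by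
  simp only [mul_add, sum_add_distrib, mul_sum]
  congr 1 <;> refine sum_congr rfl fun j _ => by ring

theorem sum_cast_mul_eq_sum_add {s : Finset ℕ} (hs : ∀ m ∈ s, 1 ≤ m) (ℓ : ℕ → ℕ) {n : ℕ}
    (h : ∑ m ∈ s, ℓ m * (m - 1) = n) :
    ∑ m ∈ s, (m : ℝ) * ℓ m = ∑ m ∈ s, (ℓ m : ℝ) + n := by
  have hcast : ∑ m ∈ s, (ℓ m : ℝ) * ((m : ℝ) - 1) = n := by
    rw [← h, Nat.cast_sum]
    refine sum_congr rfl fun m hm => ?_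
    rw [Nat.cast_mul, Nat.cast_sub (hs m hm), Nat.cast_one]
  rw [← hcast, ← sum_add_distrib]
  exact sum_congr rfl fun m _ => by ring

theorem two_le_sum_of_sum_mul_sub_one_eq {s : Finset ℕ} {n : ℕ} (hn : 0 < n)
    (hs : ∀ m ∈ s, m ≤ n) (ℓ : ℕ → ℕ) (h : ∑ m ∈ s, ℓ m * (m - 1) = n) :
    2 ≤ ∑ m ∈ s, ℓ m := by
  by_contra! hS
  have hle : n ≤ (∑ m ∈ s, ℓ m) * (n - 1) := by
    conv_lhs => rw [← h]
    rw [sum_mul]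
    exact sum_le_sum fun m hm => Nat.mul_le_mul_left _ (Nat.sub_le_sub_right (hs m hm) 1)
  have : (∑ m ∈ s, ℓ m) * (n - 1) ≤ n - 1 := by
    simpa using Nat.mul_le_mul_right (n - 1) (by omega : ∑ m ∈ s, ℓ m ≤ 1)
  omega

/-- nonresonance relations between the coefficients `g_m`, `k_m` under
the combinatorial constraint `∑_{m=2}^{i-1} ℓ_m (m-1) = i-1`. -/
theorem stmt6 (γ μ : ℝ) (hγ : 1 < γ ∧ γ < 3) (hμ : 1/2 ≤ μ ∧ μ < 1)
    (i : ℕ) (hi : 3 ≤ i) (ℓ : ℕ → ℕ)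
    (hconstraint : ∑ m ∈ Finset.Icc 2 (i - 1), ℓ m * (m - 1) = i - 1)
    (g k : ℕ → ℝ)
    (hg : ∀ m : ℕ, g m = μ + (m : ℝ) - 1 - (3 - γ) * (m : ℝ) * μ / (γ + 1))
    (hk : ∀ m : ℕ, k m = (m : ℝ) - 1 - (m : ℝ) * μ) :
    (g i - ∑ m ∈ Finset.Icc 2 (i - 1), (ℓ m : ℝ) * g m
        = μ * (2 * (γ - 1) / (γ + 1)) * (1 - ∑ m ∈ Finset.Icc 2 (i - 1), (ℓ m : ℝ))) ∧
    (g i - ∑ m ∈ Finset.Icc 2 (i - 1), (ℓ m : ℝ) * g m ≠ 0) ∧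
    (k i - ∑ m ∈ Finset.Icc 2 (i - 1), (ℓ m : ℝ) * g m
        = -μ - (2 * (γ - 1) / (γ + 1)) * μ * ∑ m ∈ Finset.Icc 2 (i - 1), (m : ℝ) * (ℓ m : ℝ)) ∧
    (k i - ∑ m ∈ Finset.Icc 2 (i - 1), (ℓ m : ℝ) * g m ≠ 0) ∧
    (g i - ∑ m ∈ Finset.Icc 2 (i - 1), (ℓ m : ℝ) * g m < 0) := by
  obtain ⟨hγ1, -⟩ := hγ
  have hTS := sum_cast_mul_eq_sum_add (fun m hm => by grind) ℓ hconstraint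
  rw [Nat.cast_sub (by omega), Nat.cast_one] at hTS
  have hS : 2 ≤ ∑ m ∈ Icc 2 (i - 1), (ℓ m : ℝ) := by
    exact_mod_cast two_le_sum_of_sum_mul_sub_one_eq (by omega)
      (fun m hm => (mem_Icc.mp hm).2) ℓ hconstraint
  set S := ∑ m ∈ Icc 2 (i - 1), (ℓ m : ℝ)
  set T := ∑ m ∈ Icc 2 (i - 1), (m : ℝ) * ℓ m
  have hT : 0 ≤ T := sum_nonneg fun m _ => by positivity
  have hsum : ∑ m ∈ Icc 2 (i - 1), (ℓ m : ℝ) * g m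
      = (μ - 1) * S + (1 - (3 - γ) * μ / (γ + 1)) * T := by
    rw [← sum_mul_add_mul]
    exact sum_congr rfl fun m _ => by rw [hg]; ring
  have hγ0 : γ + 1 ≠ 0 := by linarith
  have hc : 0 < 2 * (γ - 1) / (γ + 1) := div_pos (by linarith) (by linarith)
  have hg_diff : g i - ∑ m ∈ Icc 2 (i - 1), (ℓ m : ℝ) * g m
      = μ * (2 * (γ - 1) / (γ + 1)) * (1 - S) := by
    rw [hsum, hg, hTS]; field_simp; ring
  have hk_diff : k i - ∑ m ∈ Icc 2 (i - 1), (ℓ m : ℝ) * g m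
      = -μ - 2 * (γ - 1) / (γ + 1) * μ * T := by
    rw [hsum, hk, hTS]; field_simp; ring
  have hg_neg : g i - ∑ m ∈ Icc 2 (i - 1), (ℓ m : ℝ) * g m < 0 := by
    rw [hg_diff]
    exact mul_neg_of_pos_of_neg (mul_pos (by linarith) hc) (by linarith)
  have hk_neg : k i - ∑ m ∈ Icc 2 (i - 1), (ℓ m : ℝ) * g m < 0 := by
    rw [hk_diff]
    nlinarith [mul_nonneg (mul_nonneg hc.le (by linarith : 0 ≤ μ)) hT]
  exact ⟨hg_diff, hg_neg.ne, hk_diff, hk_neg.ne, hg_neg⟩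
end

section
/- Let γ ∈ (1,3), μ ∈ [1/2,1), and a ≤ 0. Define for y > 0 the function φ_a(y) = (-z̄(y))^{(1+a)/(1-μ)} / (1 - μ + (-z̄(y))^{μ/(1-μ)}), where z̄ satisfies (y + ((γ+1)/4)z̄)z̄' - (1-μ)z̄ = 0 with z̄ < 0 and the normalization (4μ/(γ+1))y = -z̄ + (-z̄)^{1/(1-μ)}. Then φ_a is an eigenfunction of the linearized operator L φ = (μ - 1 + ((γ+1)/4)z̄')φ + (y + ((γ+1)/4)z̄)φ' with eigenvalue a: L φ_a = a φ_a. -/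
/-!
Write `w = -z̄(y)` and `E = 1 - μ + w^{μ/(1-μ)}`. The normalization makes the transport coefficient
explicit, `(4μ/(γ+1)) (y + ((γ+1)/4) z̄) = w E`, and the ODE reads `(y + ((γ+1)/4) z̄) ∂_y w = (1 - μ) w`.
So the transport part of `L` acts on functions of `w` as `(1 - μ) w ∂_w`, the potential
`((γ+1)/4) ∂_y z̄` equals `-μ(1-μ)/E`, and for `φ_a = w^{(1+a)/(1-μ)} / E` the three terms of
`L φ_a / φ_a` are `μ - 1`, `-μ(1-μ)/E` and `1 + a - μ w^{μ/(1-μ)}/E`, which sum to `a`.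
-/

open Real

lemma rpow_one_div_one_sub_eq_mul_rpow {w μ : ℝ} (hw : 0 < w) (hμ : μ ≠ 1) :
    w ^ (1 / (1 - μ)) = w * w ^ (μ / (1 - μ)) := by
  have h : 1 / (1 - μ) = 1 + μ / (1 - μ) := by
    field_simp [sub_ne_zero.mpr hμ.symm]
    ring
  rw [h, rpow_add hw, rpow_one]

lemma hasDerivAt_rpow_div_const_add_rpow {p q c w : ℝ} (hw : w ≠ 0) (hE : c + w ^ q ≠ 0) :
    HasDerivAt (fun x => x ^ p / (c + x ^ q))
      ((p - q * w ^ q / (c + w ^ q)) * (w ^ p / (c + w ^ q)) / w) w := by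
  have hnum := hasDerivAt_rpow_const (x := w) (p := p) (Or.inl hw)
  have hden := (hasDerivAt_rpow_const (x := w) (p := q) (Or.inl hw)).const_add c
  refine (hnum.div hden hE).congr_deriv ?_
  rw [rpow_sub_one hw, rpow_sub_one hw]
  field_simp

lemma mul_transport_eq_of_normalization {γ μ y z : ℝ} (hγ : γ + 1 ≠ 0) (hμ : μ ≠ 1) (hz : z < 0)
    (hnorm : 4 * μ / (γ + 1) * y = -z + (-z) ^ ((1 : ℝ) / (1 - μ))) :
    4 * μ / (γ + 1) * (y + (γ + 1) / 4 * z) = -z * (1 - μ + (-z) ^ (μ / (1 - μ))) := by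
  rw [rpow_one_div_one_sub_eq_mul_rpow (neg_pos.mpr hz) hμ] at hnorm
  field_simp at hnorm ⊢
  linear_combination hnorm

lemma linearized_eigen_identity {γ μ a z z' D B φ : ℝ} (hγ : γ + 1 ≠ 0) (hμ : 1 - μ ≠ 0)
    (hz : z ≠ 0) (hE : 1 - μ + B ≠ 0)
    (htransport : 4 * μ / (γ + 1) * D = -z * (1 - μ + B)) (hODE : D * z' - (1 - μ) * z = 0) :
    (μ - 1) * φ + (γ + 1) / 4 * z' * φ
        + D * (((1 + a) / (1 - μ) - μ / (1 - μ) * B / (1 - μ + B)) * φ / -z * -z')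
      = a * φ := by
  have hκ : (γ + 1) / 4 * (4 * μ / (γ + 1)) = μ := by field_simp
  have hpotential : (γ + 1) / 4 * z' = -(μ * (1 - μ)) / (1 - μ + B) := by
    rw [eq_div_iff hE]
    apply mul_left_cancel₀ (neg_ne_zero.mpr hz)
    linear_combination (-((γ + 1) / 4 * z')) * htransport + z' * D * hκ + μ * hODE
  have htransport_term :
      D * (((1 + a) / (1 - μ) - μ / (1 - μ) * B / (1 - μ + B)) * φ / -z * -z')
        = (1 + a - μ * B / (1 - μ + B)) * φ := by
    calc _ = ((1 + a) / (1 - μ) - μ / (1 - μ) * B / (1 - μ + B)) * φ * (D * z' / z) := by ring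
      _ = _ := by
        rw [show D * z' = (1 - μ) * z by linear_combination hODE, mul_div_cancel_right₀ _ hz]
        field_simp
  rw [htransport_term, hpotential]
  field_simp
  ring

theorem stmt15_general (γ μ a : ℝ) (hγ : 1 < γ ∧ γ < 3) (hμ : 1/2 ≤ μ ∧ μ < 1)
    (zb : ℝ → ℝ) (hdiff : ∀ y : ℝ, 0 < y → DifferentiableAt ℝ zb y)
    (hneg : ∀ y : ℝ, 0 < y → zb y < 0)
    (hODE : ∀ y : ℝ, 0 < y →
      (y + (γ + 1) / 4 * zb y) * deriv zb y - (1 - μ) * zb y = 0)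
    (hnorm : ∀ y : ℝ, 0 < y →
      4 * μ / (γ + 1) * y = -zb y + (-zb y) ^ ((1:ℝ) / (1 - μ)))
    (φ : ℝ → ℝ)
    (hφ : ∀ y : ℝ,
      φ y = (-zb y) ^ ((1 + a) / (1 - μ)) / (1 - μ + (-zb y) ^ (μ / (1 - μ)))) :
    ∀ y : ℝ, 0 < y →
      (μ - 1) * φ y + (γ + 1) / 4 * deriv zb y * φ y
          + (y + (γ + 1) / 4 * zb y) * deriv φ y
        = a * φ y := by
  intro y hy
  have hγ1 : γ + 1 ≠ 0 := by linarith [hγ.1]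
  have hw : 0 < -zb y := neg_pos.mpr (hneg y hy)
  have hE : 0 < 1 - μ + (-zb y) ^ (μ / (1 - μ)) := by
    linarith [rpow_pos_of_pos hw (μ / (1 - μ)), hμ.2]
  have hφ' := ((hasDerivAt_rpow_div_const_add_rpow (p := (1 + a) / (1 - μ)) hw.ne' hE.ne').comp y
    (hdiff y hy).hasDerivAt.neg).congr_of_eventuallyEq (.of_forall hφ)
  rw [hφ'.deriv, ← hφ y]
  exact linearized_eigen_identity hγ1 (sub_ne_zero.mpr hμ.2.ne') (hneg y hy).ne hE.ne'
    (mul_transport_eq_of_normalization hγ1 hμ.2.ne (hneg y hy) (hnorm y hy)) (hODE y hy)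

/-- `φ_a` is an eigenfunction of the linearized operator with eigenvalue `a`. -/
theorem stmt15 (γ μ a : ℝ) (hγ : 1 < γ ∧ γ < 3) (hμ : 1/2 ≤ μ ∧ μ < 1) (ha : a ≤ 0)
    (zb : ℝ → ℝ) (hdiff : ∀ y : ℝ, 0 < y → DifferentiableAt ℝ zb y)
    (hneg : ∀ y : ℝ, 0 < y → zb y < 0)
    (hODE : ∀ y : ℝ, 0 < y →
      (y + (γ + 1) / 4 * zb y) * deriv zb y - (1 - μ) * zb y = 0)
    (hnorm : ∀ y : ℝ, 0 < y →
      4 * μ / (γ + 1) * y = -zb y + (-zb y) ^ ((1:ℝ) / (1 - μ)))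
    (φ : ℝ → ℝ)
    (hφ : ∀ y : ℝ,
      φ y = (-zb y) ^ ((1 + a) / (1 - μ)) / (1 - μ + (-zb y) ^ (μ / (1 - μ)))) :
    ∀ y : ℝ, 0 < y →
      (μ - 1) * φ y + (γ + 1) / 4 * deriv zb y * φ y
          + (y + (γ + 1) / 4 * zb y) * deriv φ y
        = a * φ y :=
  stmt15_general γ μ a hγ hμ zb hdiff hneg hODE hnorm φ hφ
end

section
/- Consider the scalar ODE ∂_τ w₁ + (1 - ((3-γ)/(γ+1))·μ/(μ - ((3-γ)/4)w₁))·μ·w₁ + ((γ+1)μ/(4μ - (3-γ)w₁))·w₁² = 0 for γ ∈ (1,3), μ ∈ [1/2,1). If w₁(τ₀) = ε₀ with ε₀ > 0 sufficiently small, then the solution exists for all τ ≥ τ₀, is strictly decreasing, stays in (0, ε₀), and satisfies 0 < w₁(τ) < w₁(τ₀)·e^{-α²(τ-τ₀)} for some constant α ≠ 0. If w₁(τ₀) = 0 then w₁ ≡ 0. -/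
open Real Set Filter Topology Function

/-!
With `k = (γ - 1) μ / 2` and `b = 4 μ / (γ + 1)` the right-hand side factors as
`rhs x = -k x (b + x) / (μ - (3 - γ) x / 4)`, so the equation separates: by partial fractions
`P x = ((γ + 1) / 4 · log x - log (b + x)) / k` satisfies `P' = -1 / rhs`, and
`w τ = P⁻¹ (P ε₀ - (τ - τ₀))` is a solution. `P` is strictly increasing on `(0, 1]` and tends
to `-∞` at `0`, so `w` is defined for all `τ ≥ τ₀`, decreasing and positive; comparing the
`log x` terms of `P (w τ)` and `P ε₀` gives the decay rate `4 k / (γ + 1)`.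
For zero data, `|rhs x| ≤ 12 |x|` near `0`, and Grönwall's inequality forces `w ≡ 0`.
-/

theorem StrictMonoOn.continuousAt_invFunOn {α β : Type*} [LinearOrder α] [TopologicalSpace α]
    [OrderTopology α] [DenselyOrdered α] [Nonempty α] [LinearOrder β] [TopologicalSpace β]
    [OrderTopology β] {f : α → β} {s : Set α} {t : Set β} (hs : IsOpen s) (ht : IsOpen t)
    (hf : StrictMonoOn f s) (hst : MapsTo f s t) (hts : SurjOn f s t) {y : β} (hy : y ∈ t) :
    ContinuousAt (invFunOn f s) y := by
  have hmono : StrictMonoOn (invFunOn f s) t := fun y₁ h₁ y₂ h₂ hlt => by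
    rwa [← hf.lt_iff_lt (hts.mapsTo_invFunOn h₁) (hts.mapsTo_invFunOn h₂),
      hts.rightInvOn_invFunOn h₁, hts.rightInvOn_invFunOn h₂]
  have himage : invFunOn f s '' t = s :=
    (hts.mapsTo_invFunOn.image_subset).antisymm fun x hx =>
      ⟨f x, hst hx, hf.injOn.leftInvOn_invFunOn hx⟩
  exact hmono.continuousAt_of_image_mem_nhds (ht.mem_nhds hy)
    (by rw [himage]; exact hs.mem_nhds (hts.mapsTo_invFunOn hy))

theorem StrictMonoOn.hasDerivAt_invFunOn {f : ℝ → ℝ} {f' : ℝ} {s t : Set ℝ} (hs : IsOpen s)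
    (ht : IsOpen t) (hf : StrictMonoOn f s) (hst : MapsTo f s t) (hts : SurjOn f s t) {y : ℝ}
    (hy : y ∈ t) (hderiv : HasDerivAt f f' (invFunOn f s y)) (hf' : f' ≠ 0) :
    HasDerivAt (invFunOn f s) f'⁻¹ y :=
  hderiv.of_local_left_inverse (hf.continuousAt_invFunOn hs ht hst hts hy) hf'
    (eventually_of_mem (ht.mem_nhds hy) fun _ hz => hts.rightInvOn_invFunOn hz)

theorem eq_zero_of_hasDerivAt_of_norm_le_mul_norm {E : Type*} [NormedAddCommGroup E]
    [NormedSpace ℝ E] {v : E → E} {K r : ℝ} (hr : 0 < r) (hv : ∀ x, ‖x‖ ≤ r → ‖v x‖ ≤ K * ‖x‖)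
    {w : ℝ → E} {τ₀ : ℝ} (hw : ∀ τ, τ₀ ≤ τ → HasDerivAt w (v (w τ)) τ) (h₀ : w τ₀ = 0) :
    ∀ τ, τ₀ ≤ τ → w τ = 0 := by
  intro T hT
  have hcont : ContinuousOn w (Icc τ₀ T) := fun t ht =>
    (hw t ht.1).continuousAt.continuousWithinAt
  refine IsClosed.Icc_subset_of_forall_mem_nhdsWithin (s := {t | w t = 0}) ?_ h₀ ?_ ⟨hT, le_rfl⟩
  · rw [inter_comm]
    exact hcont.preimage_isClosed_of_isClosed isClosed_Icc isClosed_singleton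
  rintro t ⟨ht, htτ₀, -⟩
  have hsmall : ∀ᶠ s in 𝓝[≥] t, ‖w s‖ ≤ r := by
    refine mem_nhdsWithin_of_mem_nhds
      ((hw t htτ₀).continuousAt.eventually (p := fun x => ‖x‖ ≤ r) ?_)
    rw [show w t = 0 from ht]
    filter_upwards [Metric.closedBall_mem_nhds (0 : E) hr] with x hx
    exact mem_closedBall_zero_iff.mp hx
  obtain ⟨b, -, hbt, hb⟩ := exists_Icc_mem_subset_of_mem_nhdsGE hsmall
  have hzero := eq_zero_of_abs_deriv_le_mul_abs_self_of_eq_zero_right (K := K)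
    (fun s hs => (hw s (htτ₀.trans hs.1)).continuousAt.continuousWithinAt)
    (fun s hs => (hw s (htτ₀.trans hs.1)).hasDerivWithinAt) ht
    (fun s hs => hv _ (hb (Ico_subset_Icc_self hs)))
  exact mem_of_superset (nhdsWithin_mono _ Ioi_subset_Ici_self hbt) hzero

namespace ModulationODE

noncomputable def rhs (γ μ x : ℝ) : ℝ :=
  -((1 - (3 - γ) / (γ + 1) * μ / (μ - (3 - γ) / 4 * x)) * μ * x
    + (γ + 1) * μ / (4 * μ - (3 - γ) * x) * x ^ 2)

noncomputable def potential (γ μ x : ℝ) : ℝ :=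
  ((γ + 1) / 4 * log x - log (4 * μ / (γ + 1) + x)) / ((γ - 1) * μ / 2)

variable {γ μ x : ℝ}

theorem rhs_eq (hγ : γ + 1 ≠ 0) (hx : μ - (3 - γ) / 4 * x ≠ 0) :
    rhs γ μ x = -((γ - 1) * μ / 2 * x * (4 * μ / (γ + 1) + x) / (μ - (3 - γ) / 4 * x)) := by
  have : μ * 4 - (3 - γ) * x ≠ 0 := by contrapose! hx; linarith
  rw [rhs]
  field_simp
  ring

theorem rhs_denom_pos (hγ₁ : 1 < γ) (hγ₃ : γ < 3) (hμ : 1 / 2 ≤ μ) (hx : x ≤ 1) :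
    0 < μ - (3 - γ) / 4 * x := by
  nlinarith

theorem rhs_neg (hγ₁ : 1 < γ) (hμ : 0 < μ) (hx : 0 < x) (hx' : 0 < μ - (3 - γ) / 4 * x) :
    rhs γ μ x < 0 := by
  rw [rhs_eq (by linarith) hx'.ne', neg_lt_zero]
  have : 0 < γ - 1 := by linarith
  positivity

theorem hasDerivAt_potential (hγ₁ : 1 < γ) (hμ : 0 < μ) (hx : 0 < x)
    (hx' : 0 < μ - (3 - γ) / 4 * x) : HasDerivAt (potential γ μ) (-(rhs γ μ x)⁻¹) x := by
  have hb : 0 < 4 * μ / (γ + 1) + x := add_pos (div_pos (by linarith) (by linarith)) hx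
  refine ((((hasDerivAt_log hx.ne').const_mul ((γ + 1) / 4)).sub
    (((hasDerivAt_id' x).const_add (4 * μ / (γ + 1))).log hb.ne')).div_const
      ((γ - 1) * μ / 2)).congr_deriv ?_
  rw [rhs_eq (by linarith) hx'.ne']
  have : γ - 1 ≠ 0 := by linarith
  have : γ + 1 ≠ 0 := by linarith
  field_simp
  ring

theorem continuousOn_potential (hγ₁ : 1 < γ) (hγ₃ : γ < 3) (hμ : 1 / 2 ≤ μ) :
    ContinuousOn (potential γ μ) (Ioc 0 1) := fun x hx =>
  (hasDerivAt_potential hγ₁ (by linarith) hx.1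
    (rhs_denom_pos hγ₁ hγ₃ hμ hx.2)).continuousAt.continuousWithinAt

theorem strictMonoOn_potential (hγ₁ : 1 < γ) (hγ₃ : γ < 3) (hμ : 1 / 2 ≤ μ) :
    StrictMonoOn (potential γ μ) (Ioc 0 1) := by
  refine strictMonoOn_of_deriv_pos (convex_Ioc 0 1) (continuousOn_potential hγ₁ hγ₃ hμ)
    fun x hx => ?_
  rw [interior_Ioc] at hx
  have hd := rhs_denom_pos hγ₁ hγ₃ hμ hx.2.le
  rw [(hasDerivAt_potential hγ₁ (by linarith) hx.1 hd).deriv, neg_pos, inv_lt_zero]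
  exact rhs_neg hγ₁ (by linarith) hx.1 hd

theorem tendsto_potential_nhdsGT_zero (hγ₁ : 1 < γ) (hμ : 0 < μ) :
    Tendsto (potential γ μ) (𝓝[>] 0) atBot := by
  have hb : 0 < 4 * μ / (γ + 1) := div_pos (by linarith) (by linarith)
  have hlog : Tendsto (fun x => log (4 * μ / (γ + 1) + x)) (𝓝[>] 0)
      (𝓝 (log (4 * μ / (γ + 1) + 0))) :=
    ((continuous_const.add continuous_id).continuousAt.log
      (by simpa using hb.ne')).tendsto.mono_left nhdsWithin_le_nhds
  refine Tendsto.congr (fun x => ?_) (((tendsto_log_nhdsGT_zero.const_mul_atBot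
    (by linarith : 0 < (γ + 1) / 4)).atBot_add hlog.neg).atBot_div_const
      (by nlinarith : 0 < (γ - 1) * μ / 2))
  rw [potential]; ring

theorem surjOn_potential (hγ₁ : 1 < γ) (hγ₃ : γ < 3) (hμ : 1 / 2 ≤ μ) :
    SurjOn (potential γ μ) (Ioo 0 1) (Iio (potential γ μ 1)) := by
  intro y hy
  obtain ⟨a, hay, ha⟩ := (((tendsto_potential_nhdsGT_zero hγ₁ (by linarith)).eventually
    (eventually_le_atBot y)).and (Ioo_mem_nhdsGT one_pos)).exists
  obtain ⟨x, hx, rfl⟩ := intermediate_value_Ico ha.2.le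
    ((continuousOn_potential hγ₁ hγ₃ hμ).mono fun z hz => ⟨ha.1.trans_le hz.1, hz.2⟩)
    ⟨hay, hy⟩
  exact ⟨x, ⟨ha.1.trans_le hx.1, hx.2⟩, rfl⟩

theorem mapsTo_potential (hγ₁ : 1 < γ) (hγ₃ : γ < 3) (hμ : 1 / 2 ≤ μ) :
    MapsTo (potential γ μ) (Ioo 0 1) (Iio (potential γ μ 1)) := fun _ hx =>
  strictMonoOn_potential hγ₁ hγ₃ hμ (Ioo_subset_Ioc_self hx) (right_mem_Ioc.2 one_pos) hx.2

noncomputable def solution (γ μ τ₀ ε₀ τ : ℝ) : ℝ :=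
  invFunOn (potential γ μ) (Ioo 0 1) (potential γ μ ε₀ + τ₀ - τ)

section Solution

variable {τ₀ ε₀ τ : ℝ}

theorem potential_add_sub_lt_potential_one (hγ₁ : 1 < γ) (hγ₃ : γ < 3) (hμ : 1 / 2 ≤ μ)
    (hε₀ : ε₀ ∈ Ioo 0 1) (hτ : τ₀ ≤ τ) :
    potential γ μ ε₀ + τ₀ - τ ∈ Iio (potential γ μ 1) := by
  have : potential γ μ ε₀ < potential γ μ 1 := mapsTo_potential hγ₁ hγ₃ hμ hε₀
  rw [mem_Iio]
  linarith

theorem solution_mem (hγ₁ : 1 < γ) (hγ₃ : γ < 3) (hμ : 1 / 2 ≤ μ) (hε₀ : ε₀ ∈ Ioo 0 1)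
    (hτ : τ₀ ≤ τ) : solution γ μ τ₀ ε₀ τ ∈ Ioo 0 1 :=
  (surjOn_potential hγ₁ hγ₃ hμ).mapsTo_invFunOn
    (potential_add_sub_lt_potential_one hγ₁ hγ₃ hμ hε₀ hτ)

theorem potential_solution (hγ₁ : 1 < γ) (hγ₃ : γ < 3) (hμ : 1 / 2 ≤ μ) (hε₀ : ε₀ ∈ Ioo 0 1)
    (hτ : τ₀ ≤ τ) : potential γ μ (solution γ μ τ₀ ε₀ τ) = potential γ μ ε₀ + τ₀ - τ :=
  (surjOn_potential hγ₁ hγ₃ hμ).rightInvOn_invFunOn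
    (potential_add_sub_lt_potential_one hγ₁ hγ₃ hμ hε₀ hτ)

theorem solution_self (hγ₁ : 1 < γ) (hγ₃ : γ < 3) (hμ : 1 / 2 ≤ μ) (hε₀ : ε₀ ∈ Ioo 0 1) :
    solution γ μ τ₀ ε₀ τ₀ = ε₀ :=
  (strictMonoOn_potential hγ₁ hγ₃ hμ).injOn
    (Ioo_subset_Ioc_self (solution_mem hγ₁ hγ₃ hμ hε₀ le_rfl)) (Ioo_subset_Ioc_self hε₀)
    (by rw [potential_solution hγ₁ hγ₃ hμ hε₀ le_rfl]; ring)

theorem strictAntiOn_solution (hγ₁ : 1 < γ) (hγ₃ : γ < 3) (hμ : 1 / 2 ≤ μ)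
    (hε₀ : ε₀ ∈ Ioo 0 1) : StrictAntiOn (solution γ μ τ₀ ε₀) (Ici τ₀) := fun s hs t ht hst => by
  rw [← (strictMonoOn_potential hγ₁ hγ₃ hμ).lt_iff_lt
    (Ioo_subset_Ioc_self (solution_mem hγ₁ hγ₃ hμ hε₀ ht))
    (Ioo_subset_Ioc_self (solution_mem hγ₁ hγ₃ hμ hε₀ hs)),
    potential_solution hγ₁ hγ₃ hμ hε₀ ht, potential_solution hγ₁ hγ₃ hμ hε₀ hs]
  linarith

theorem hasDerivAt_solution (hγ₁ : 1 < γ) (hγ₃ : γ < 3) (hμ : 1 / 2 ≤ μ) (hε₀ : ε₀ ∈ Ioo 0 1)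
    (hτ : τ₀ ≤ τ) :
    HasDerivAt (solution γ μ τ₀ ε₀) (rhs γ μ (solution γ μ τ₀ ε₀ τ)) τ := by
  have hmem := solution_mem hγ₁ hγ₃ hμ hε₀ hτ
  have hd := rhs_denom_pos hγ₁ hγ₃ hμ hmem.2.le
  have hinv := ((strictMonoOn_potential hγ₁ hγ₃ hμ).mono Ioo_subset_Ioc_self).hasDerivAt_invFunOn
    isOpen_Ioo isOpen_Iio (mapsTo_potential hγ₁ hγ₃ hμ) (surjOn_potential hγ₁ hγ₃ hμ)
    (potential_add_sub_lt_potential_one hγ₁ hγ₃ hμ hε₀ hτ)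
    (hasDerivAt_potential hγ₁ (by linarith) hmem.1 hd)
    (neg_ne_zero.2 (inv_ne_zero (rhs_neg hγ₁ (by linarith) hmem.1 hd).ne))
  refine (hinv.comp τ ((hasDerivAt_id τ).const_sub _)).congr_deriv ?_
  rw [inv_neg, inv_inv, neg_mul_neg, mul_one]
  rfl

theorem solution_lt_self (hγ₁ : 1 < γ) (hγ₃ : γ < 3) (hμ : 1 / 2 ≤ μ) (hε₀ : ε₀ ∈ Ioo 0 1)
    (hτ : τ₀ < τ) : solution γ μ τ₀ ε₀ τ < ε₀ := by
  simpa only [solution_self hγ₁ hγ₃ hμ hε₀] using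
    strictAntiOn_solution hγ₁ hγ₃ hμ hε₀ (le_refl τ₀) hτ.le hτ

theorem solution_lt_mul_exp (hγ₁ : 1 < γ) (hγ₃ : γ < 3) (hμ : 1 / 2 ≤ μ) (hε₀ : ε₀ ∈ Ioo 0 1)
    (hτ : τ₀ < τ) :
    solution γ μ τ₀ ε₀ τ < ε₀ * exp (-(2 * μ * (γ - 1) / (γ + 1)) * (τ - τ₀)) := by
  set x := solution γ μ τ₀ ε₀ τ
  have hx := solution_mem hγ₁ hγ₃ hμ hε₀ hτ.le
  have hxε : x < ε₀ := solution_lt_self hγ₁ hγ₃ hμ hε₀ hτ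
  have hP := potential_solution hγ₁ hγ₃ hμ hε₀ hτ.le
  have hk : (γ - 1) * μ / 2 ≠ 0 := by nlinarith
  have hb : 0 < 4 * μ / (γ + 1) + x := add_pos (div_pos (by linarith) (by linarith)) hx.1
  rw [potential, potential, div_eq_iff hk, add_sub_assoc, add_mul, div_mul_cancel₀ _ hk] at hP
  have hlog_b : log (4 * μ / (γ + 1) + x) < log (4 * μ / (γ + 1) + ε₀) :=
    log_lt_log hb (by linarith)
  have hlog : log x < log ε₀ + -(2 * μ * (γ - 1) / (γ + 1)) * (τ - τ₀) := by
    refine lt_of_mul_lt_mul_left ?_ (by linarith : (0 : ℝ) ≤ (γ + 1) / 4)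
    have : (γ + 1) / 4 * (log ε₀ + -(2 * μ * (γ - 1) / (γ + 1)) * (τ - τ₀))
        = (γ + 1) / 4 * log ε₀ - (γ - 1) * μ / 2 * (τ - τ₀) := by
      field_simp
      ring
    linarith
  calc x = exp (log x) := (exp_log hx.1).symm
    _ < exp (log ε₀ + -(2 * μ * (γ - 1) / (γ + 1)) * (τ - τ₀)) := exp_lt_exp.2 hlog
    _ = ε₀ * exp (-(2 * μ * (γ - 1) / (γ + 1)) * (τ - τ₀)) := by rw [exp_add, exp_log hε₀.1]

end Solution

theorem abs_rhs_le (hγ₁ : 1 < γ) (hγ₃ : γ < 3) (hμ : 1 / 2 ≤ μ) (hμ₁ : μ < 1)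
    (hx : |x| ≤ 1 / 2) : |rhs γ μ x| ≤ 12 * |x| := by
  obtain ⟨hx₁, hx₂⟩ := abs_le.1 hx
  have hd : 1 / 4 ≤ μ - (3 - γ) / 4 * x := by nlinarith
  have hb : 0 < 4 * μ / (γ + 1) + x ∧ 4 * μ / (γ + 1) + x ≤ 5 / 2 := by
    have : 4 * μ / (γ + 1) ≤ 2 := by rw [div_le_iff₀ (by linarith)]; nlinarith
    have : 1 / 2 < 4 * μ / (γ + 1) := by rw [lt_div_iff₀ (by linarith)]; nlinarith
    constructor <;> linarith
  have hk : 0 < (γ - 1) * μ / 2 ∧ (γ - 1) * μ / 2 ≤ 1 := by constructor <;> nlinarith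
  rw [rhs_eq (by linarith) (by linarith), abs_neg, abs_div,
    abs_of_pos (show 0 < μ - (3 - γ) / 4 * x by linarith), div_le_iff₀ (by linarith)]
  calc |(γ - 1) * μ / 2 * x * (4 * μ / (γ + 1) + x)|
      = (γ - 1) * μ / 2 * (4 * μ / (γ + 1) + x) * |x| := by
        rw [abs_mul, abs_mul, abs_of_pos hk.1, abs_of_pos hb.1]; ring
    _ ≤ 1 * (5 / 2) * |x| :=
        mul_le_mul_of_nonneg_right (mul_le_mul hk.2 hb.2 hb.1.le zero_le_one) (abs_nonneg x)
    _ ≤ 12 * |x| * (μ - (3 - γ) / 4 * x) := by nlinarith [abs_nonneg x]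

end ModulationODE

open ModulationODE

/-- existence, monotone decay, and exponential decay for the modulation
ODE for `w₁`, together with uniqueness of the trivial solution. -/
theorem stmt16 (γ μ τ₀ : ℝ) (hγ : 1 < γ ∧ γ < 3) (hμ : 1/2 ≤ μ ∧ μ < 1) :
    (∃ ε₁ : ℝ, 0 < ε₁ ∧ ∀ ε₀ : ℝ, 0 < ε₀ → ε₀ < ε₁ →
      ∃ w : ℝ → ℝ, w τ₀ = ε₀ ∧
        (∀ τ : ℝ, τ₀ ≤ τ → HasDerivAt w
          (-((1 - (3 - γ) / (γ + 1) * μ / (μ - (3 - γ) / 4 * w τ)) * μ * w τ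
              + (γ + 1) * μ / (4 * μ - (3 - γ) * w τ) * (w τ) ^ 2)) τ) ∧
        StrictAntiOn w (Set.Ici τ₀) ∧
        (∃ α : ℝ, α ≠ 0 ∧ ∀ τ : ℝ, τ₀ < τ →
          0 < w τ ∧ w τ < ε₀ ∧ w τ < ε₀ * Real.exp (-α ^ 2 * (τ - τ₀)))) ∧
    (∀ w : ℝ → ℝ,
      (∀ τ : ℝ, τ₀ ≤ τ → HasDerivAt w
        (-((1 - (3 - γ) / (γ + 1) * μ / (μ - (3 - γ) / 4 * w τ)) * μ * w τ
            + (γ + 1) * μ / (4 * μ - (3 - γ) * w τ) * (w τ) ^ 2)) τ) →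
      w τ₀ = 0 → ∀ τ : ℝ, τ₀ ≤ τ → w τ = 0) := by
  obtain ⟨hγ₁, hγ₃⟩ := hγ
  obtain ⟨hμ, hμ₁⟩ := hμ
  refine ⟨⟨1, one_pos, fun ε₀ hε₀ hε₁ => ?_⟩, fun w hw h₀ =>
    eq_zero_of_hasDerivAt_of_norm_le_mul_norm (v := rhs γ μ) (by norm_num : (0 : ℝ) < 1 / 2)
      (fun _ hx => abs_rhs_le hγ₁ hγ₃ hμ hμ₁ hx) hw h₀⟩
  have hε : ε₀ ∈ Ioo 0 1 := ⟨hε₀, hε₁⟩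
  have hrate : 0 < 2 * μ * (γ - 1) / (γ + 1) := div_pos (by nlinarith) (by linarith)
  refine ⟨solution γ μ τ₀ ε₀, solution_self hγ₁ hγ₃ hμ hε,
    fun τ hτ => hasDerivAt_solution hγ₁ hγ₃ hμ hε hτ, strictAntiOn_solution hγ₁ hγ₃ hμ hε,
    √(2 * μ * (γ - 1) / (γ + 1)), (sqrt_pos.2 hrate).ne', fun τ hτ =>
    ⟨(solution_mem hγ₁ hγ₃ hμ hε hτ.le).1, solution_lt_self hγ₁ hγ₃ hμ hε hτ, ?_⟩⟩
  rw [sq_sqrt hrate.le]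
  exact solution_lt_mul_exp hγ₁ hγ₃ hμ hε hτ
end

section
/- Let n ≥ 2 be an integer and f ∈ Hⁿ([0,∞)) with f(0) = f'(0) = ⋯ = f^{(n-1)}(0) = 0. Then for each i ∈ {1,…,n-1} and y_* > 0 there is a constant C (depending on y_*, n, i) such that ‖y^{i-n} ∂_y^i f‖_{L²([y_*,∞))} ≤ C ‖y^{-n} f‖_{L²([0,∞))}^{1-i/n} · ‖∂_y^n f‖_{L²([0,∞))}^{i/n}. -/
/-!
Write `N j` for the norm of `f⁽ʲ⁾(y) / yⁿ⁻ʲ` in `L²(0, ∞)`. Since `f, …, f⁽ⁿ⁻¹⁾` vanish at `0`,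
`f⁽ʲ⁾ = O(yⁿ⁻ʲ)` there: every `N j` is finite and all boundary terms at `0` vanish. Integrating
`(f⁽ʲ⁾)² y^(2(j-n)+1)` by parts gives Hardy's inequality `N j ≤ 2 N (j+1)`, and integrating
`f⁽ʲ⁾ f⁽ʲ⁺¹⁾ y^(2(j+1-n))` by parts then gives `N (j+1)² ≤ (4n+1) N j N (j+2)`. So `log N` is convex
up to a quadratic correction, and lies below its chord up to a constant:
`N i ≤ C N 0^(1-i/n) N n^(i/n)`. Restricting the integral to `[y_*, ∞)` only decreases `N i`.
-/

open MeasureTheory Set Filter Topology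

theorem mul_le_chord_of_convex {n : ℕ} {p : ℕ → ℝ}
    (hp : ∀ j, j + 2 ≤ n → 2 * p (j + 1) ≤ p j + p (j + 2)) {i : ℕ} (hi : i ≤ n) :
    n * p i ≤ (n - i) * p 0 + i * p n := by
  set D : ℕ → ℝ := fun x => p (x + 1) - p x
  have hD : ∀ x y, x ≤ y → y < n → D x ≤ D y := by
    intro x y hxy hy
    induction y, hxy using Nat.le_induction with
    | base => exact le_rfl
    | succ y _ ih =>
      have := hp y (by omega)
      exact (ih (by omega)).trans (by simp only [D]; linarith)
  have hsum : ∀ a b, a ≤ b → ∑ x ∈ Finset.Ico a b, D x = p b - p a :=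
    fun a b hab => Finset.sum_Ico_sub p hab
  -- every increment before `i` is at most every increment after it
  have key : ∑ _y ∈ Finset.Ico i n, ∑ x ∈ Finset.Ico 0 i, D x
      ≤ ∑ y ∈ Finset.Ico i n, ∑ _x ∈ Finset.Ico 0 i, D y :=
    Finset.sum_le_sum fun y hy => Finset.sum_le_sum fun x hx => by
      simp only [Finset.mem_Ico] at hx hy
      exact hD x y (by omega) hy.2
  simp only [Finset.sum_const, Nat.card_Ico, nsmul_eq_mul, ← Finset.mul_sum, hsum 0 i (by omega),
    hsum i n hi, Nat.cast_sub hi, Nat.sub_zero] at key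
  nlinarith

theorem le_interpolate_of_sq_le_mul_of_pos {n : ℕ} {K : ℝ} (hK : 1 ≤ K) {q : ℕ → ℝ}
    (hq : ∀ j ≤ n, 0 < q j) (hconv : ∀ j, j + 2 ≤ n → q (j + 1) ^ 2 ≤ K * (q j * q (j + 2)))
    {i : ℕ} (hi : i ≤ n) :
    q i ≤ K ^ (n * n) * q 0 ^ (1 - (i : ℝ) / n) * q n ^ ((i : ℝ) / n) := by
  rcases Nat.eq_zero_or_pos n with rfl | hn
  · obtain rfl : i = 0 := by omega
    simp
  set κ := Real.log K
  -- `log q` is convex up to a quadratic correction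
  set p : ℕ → ℝ := fun j => Real.log (q j) - κ / 2 * j * (n - j)
  have hp : ∀ j, j + 2 ≤ n → 2 * p (j + 1) ≤ p j + p (j + 2) := by
    intro j hj
    have hlog := Real.log_le_log (by have := hq (j + 1) (by omega); positivity) (hconv j hj)
    have hj₀ := hq j (by omega)
    have hj₂ := hq (j + 2) hj
    rw [Real.log_pow, Real.log_mul (by positivity) (by positivity),
      Real.log_mul hj₀.ne' hj₂.ne'] at hlog
    simp only [p]
    push_cast at hlog ⊢
    nlinarith
  have hchord := mul_le_chord_of_convex hp hi
  have hn' : (0 : ℝ) < n := by exact_mod_cast hn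
  have hlog : Real.log (q i) ≤ (1 - (i : ℝ) / n) * Real.log (q 0) + (i : ℝ) / n * Real.log (q n)
      + κ * (i * (n - i) / 2) := by
    simp only [p, CharP.cast_eq_zero, zero_mul, mul_zero, sub_self] at hchord
    rw [← mul_le_mul_iff_of_pos_left hn']
    field_simp
    nlinarith
  have hexp : (i * (n - i) / 2 : ℝ) ≤ (n * n : ℕ) := by
    have : (i : ℝ) ≤ n := by exact_mod_cast hi
    push_cast
    nlinarith
  calc q i = Real.exp (Real.log (q i)) := (Real.exp_log (hq i hi)).symm
    _ ≤ _ := Real.exp_le_exp.mpr hlog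
    _ = q 0 ^ (1 - (i : ℝ) / n) * q n ^ ((i : ℝ) / n) * K ^ (i * (n - i) / 2 : ℝ) := by
      rw [Real.exp_add, Real.exp_add, Real.rpow_def_of_pos (hq 0 (by omega)),
        Real.rpow_def_of_pos (hq n le_rfl), Real.rpow_def_of_pos (by positivity)]
      simp only [κ]
      ring_nf
    _ ≤ q 0 ^ (1 - (i : ℝ) / n) * q n ^ ((i : ℝ) / n) * K ^ (n * n) := by
      have h₀ := hq 0 (by omega)
      have hₙ := hq n le_rfl
      refine mul_le_mul_of_nonneg_left ?_ (by positivity)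
      rw [← Real.rpow_natCast]
      exact Real.rpow_le_rpow_of_exponent_le hK hexp
    _ = _ := by ring

theorem add_sq_le_mul_add_mul_add {x a b K δ : ℝ} (hK : 1 ≤ K) (hx : 0 ≤ x) (ha : 0 ≤ a)
    (hb : 0 ≤ b) (hδ : 0 ≤ δ) (h : x ^ 2 ≤ K * (a * b)) :
    (x + δ) ^ 2 ≤ K * ((a + δ) * (b + δ)) := by
  have h2x : 2 * x ≤ K * (a + b) := by
    refine (pow_le_pow_iff_left₀ (by positivity) (by positivity) two_ne_zero).mp ?_
    nlinarith [sq_nonneg (a - b), mul_le_mul_of_nonneg_right hK (sq_nonneg (a + b))]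
  nlinarith [mul_le_mul_of_nonneg_right h2x hδ, mul_le_mul_of_nonneg_right hK (sq_nonneg δ)]

theorem le_interpolate_of_sq_le_mul {n : ℕ} {K : ℝ} (hK : 1 ≤ K) {q : ℕ → ℝ}
    (hq : ∀ j ≤ n, 0 ≤ q j) (hconv : ∀ j, j + 2 ≤ n → q (j + 1) ^ 2 ≤ K * (q j * q (j + 2)))
    {i : ℕ} (hi : i ≤ n) :
    q i ≤ K ^ (n * n) * q 0 ^ (1 - (i : ℝ) / n) * q n ^ ((i : ℝ) / n) := by
  have hθ : 0 ≤ (i : ℝ) / n := by positivity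
  have hθ' : 0 ≤ 1 - (i : ℝ) / n :=
    sub_nonneg.mpr (div_le_one_of_le₀ (by exact_mod_cast hi) (by positivity))
  have hshift : ∀ δ > 0,
      q i ≤ K ^ (n * n) * (q 0 + δ) ^ (1 - (i : ℝ) / n) * (q n + δ) ^ ((i : ℝ) / n) :=
    fun δ hδ => (le_add_of_nonneg_right hδ.le).trans <|
      le_interpolate_of_sq_le_mul_of_pos hK (q := fun j => q j + δ)
        (fun j hj => by have := hq j hj; positivity)
        (fun j hj => add_sq_le_mul_add_mul_add hK (hq _ (by omega)) (hq _ (by omega)) (hq _ hj)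
          hδ.le (hconv j hj)) hi
  have hcont : ∀ x : ℝ, Tendsto (fun δ => x + δ) (𝓝[>] 0) (𝓝 x) := fun x =>
    ((continuous_const_add x).tendsto' 0 x (add_zero x)).mono_left nhdsWithin_le_nhds
  exact ge_of_tendsto ((tendsto_const_nhds.mul ((hcont _).rpow_const (Or.inr hθ'))).mul
    ((hcont _).rpow_const (Or.inr hθ))) (eventually_nhdsWithin_of_forall hshift)

theorem abs_integral_mul_le_sqrt_mul_sqrt {α : Type*} [MeasurableSpace α] {μ : Measure α}
    {u v : α → ℝ} (hu : MemLp u 2 μ) (hv : MemLp v 2 μ) :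
    |∫ x, u x * v x ∂μ| ≤ √(∫ x, u x ^ 2 ∂μ) * √(∫ x, v x ^ 2 ∂μ) := by
  have h := integral_mul_norm_le_Lp_mul_Lq (f := u) (g := v) Real.HolderConjugate.two_two
    (by rwa [ENNReal.ofReal_ofNat]) (by rwa [ENNReal.ofReal_ofNat])
  simp only [Real.norm_eq_abs, Real.rpow_two, sq_abs, ← Real.sqrt_eq_rpow] at h
  calc |∫ x, u x * v x ∂μ| ≤ ∫ x, |u x * v x| ∂μ := abs_integral_le_integral_abs
    _ = ∫ x, |u x| * |v x| ∂μ := by simp only [abs_mul]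
    _ ≤ _ := h

theorem eq_zero_of_tendsto_atTop_of_integrableOn_div {G : ℝ → ℝ} {a L : ℝ}
    (hG : Tendsto G atTop (𝓝 L)) (hint : IntegrableOn (fun y => G y / y) (Ioi a)) : L = 0 := by
  by_contra hL
  have hL' : 0 < |L| := abs_pos.mpr hL
  obtain ⟨b, hb⟩ := eventually_atTop.mp
    ((hG.abs.eventually (lt_mem_nhds (half_lt_self hL'))).and (eventually_gt_atTop (max a 0)))
  -- beyond `b`, `y⁻¹ ≤ (2 / |L|) |G y / y|`, so `y⁻¹` would be integrable
  refine not_integrableOn_Ioi_inv (a := b) <| Integrable.mono'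
    ((hint.mono_set fun y hy => (le_max_left a 0).trans_lt (hb y (le_of_lt hy)).2).norm.const_mul
      (2 / |L|)) measurable_inv.aestronglyMeasurable ?_
  filter_upwards [ae_restrict_mem measurableSet_Ioi] with y hy
  obtain ⟨hGy, hya⟩ := hb y (le_of_lt hy)
  have hy0 : 0 < y := (le_max_right a 0).trans_lt hya
  rw [Real.norm_of_nonneg (inv_nonneg.2 hy0.le), norm_div, Real.norm_of_nonneg hy0.le,
    ← mul_div_assoc, inv_eq_one_div]
  gcongr
  rw [div_mul_eq_mul_div, le_div_iff₀ hL', Real.norm_eq_abs]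
  linarith

theorem integral_Ioi_deriv_mul_div_pow {u v u' v' : ℝ → ℝ} {k : ℕ}
    (hu : ∀ y ∈ Ioi (0 : ℝ), HasDerivAt u (u' y) y) (hv : ∀ y ∈ Ioi (0 : ℝ), HasDerivAt v (v' y) y)
    (h0 : Tendsto (fun y => u y * v y / y ^ k) (𝓝[>] 0) (𝓝 0))
    (h1 : IntegrableOn (fun y => u' y * v y / y ^ k) (Ioi 0))
    (h2 : IntegrableOn (fun y => u y * v' y / y ^ k) (Ioi 0))
    (h3 : IntegrableOn (fun y => u y * v y / y ^ (k + 1)) (Ioi 0)) :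
    (∫ y in Ioi 0, u' y * v y / y ^ k) + ∫ y in Ioi 0, u y * v' y / y ^ k
      = k * ∫ y in Ioi 0, u y * v y / y ^ (k + 1) := by
  set G : ℝ → ℝ := fun y => u y * v y / y ^ k
  set G' : ℝ → ℝ := fun y =>
    u' y * v y / y ^ k + u y * v' y / y ^ k - k * (u y * v y / y ^ (k + 1))
  have hderiv : ∀ y ∈ Ioi (0 : ℝ), HasDerivAt G (G' y) y := by
    intro y hy
    have hy0 : y ≠ 0 := ne_of_gt hy
    refine (((hu y hy).mul (hv y hy)).div (hasDerivAt_pow k y) (pow_ne_zero k hy0)).congr_deriv ?_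
    simp only [G', Pi.mul_apply]
    rcases k with _ | k
    · simp
    · field_simp
      push_cast
      ring
  have hG'int : IntegrableOn G' (Ioi 0) := (h1.add h2).sub (h3.const_mul k)
  have hFTC : ∀ R > (0 : ℝ), ∫ y in (0 : ℝ)..R, G' y = G R := fun R hR => by
    rw [intervalIntegral.integral_eq_sub_of_hasDerivAt_of_tendsto hR (fun y hy => hderiv y hy.1)
      ((intervalIntegrable_iff_integrableOn_Ioc_of_le hR.le).mpr
        (hG'int.mono_set Ioc_subset_Ioi_self)) h0
      ((hderiv R hR).continuousAt.tendsto.mono_left nhdsWithin_le_nhds), sub_zero]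
  have hlim : Tendsto G atTop (𝓝 (∫ y in Ioi 0, G' y)) :=
    (intervalIntegral_tendsto_integral_Ioi 0 hG'int tendsto_id).congr'
      (eventually_gt_atTop 0 |>.mono hFTC)
  have hdiv : (fun y => G y / y) = fun y => u y * v y / y ^ (k + 1) := by
    ext y; simp only [G, div_div, pow_succ]
  -- the boundary term at `∞` vanishes because `G y / y` is integrable
  have hzero := eq_zero_of_tendsto_atTop_of_integrableOn_div hlim (hdiv ▸ h3)
  simp only [G'] at hzero
  rw [integral_sub (by exact h1.add h2) (h3.const_mul k), integral_add h1 h2,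
    integral_const_mul] at hzero
  linarith

noncomputable def weightedNorm (g : ℝ → ℝ) (k : ℕ) : ℝ := √(∫ y in Ioi 0, (g y / y ^ k) ^ 2)

theorem weightedNorm_nonneg (g : ℝ → ℝ) (k : ℕ) : 0 ≤ weightedNorm g k := Real.sqrt_nonneg _

section Products

variable {g h : ℝ → ℝ} {p q k : ℕ}

theorem mul_div_pow_eq (hk : p + q = k) (y : ℝ) :
    g y * h y / y ^ k = g y / y ^ p * (h y / y ^ q) := by
  rw [← hk, pow_add, mul_div_mul_comm]

theorem integral_mul_self_div_pow (hk : p + p = k) :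
    ∫ y in Ioi 0, g y * g y / y ^ k = weightedNorm g p ^ 2 := by
  rw [weightedNorm, Real.sq_sqrt (integral_nonneg fun _ => sq_nonneg _)]
  simp only [sq, mul_div_pow_eq hk]

theorem integrableOn_mul_div_pow (hg : MemLp (fun y => g y / y ^ p) 2 (volume.restrict (Ioi 0)))
    (hh : MemLp (fun y => h y / y ^ q) 2 (volume.restrict (Ioi 0))) (hk : p + q = k) :
    IntegrableOn (fun y => g y * h y / y ^ k) (Ioi 0) := by
  rw [IntegrableOn]
  simpa only [mul_div_pow_eq hk, Pi.mul_def] using hg.integrable_mul hh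

theorem abs_integral_mul_div_pow_le
    (hg : MemLp (fun y => g y / y ^ p) 2 (volume.restrict (Ioi 0)))
    (hh : MemLp (fun y => h y / y ^ q) 2 (volume.restrict (Ioi 0))) (hk : p + q = k) :
    |∫ y in Ioi 0, g y * h y / y ^ k| ≤ weightedNorm g p * weightedNorm h q := by
  simpa only [mul_div_pow_eq hk, weightedNorm] using abs_integral_mul_le_sqrt_mul_sqrt hg hh

end Products

theorem weightedNorm_succ_le_two_mul {g g' : ℝ → ℝ} {m : ℕ}
    (hg : ∀ y ∈ Ioi (0 : ℝ), HasDerivAt g (g' y) y)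
    (h0 : Tendsto (fun y => g y * g y / y ^ (2 * m + 1)) (𝓝[>] 0) (𝓝 0))
    (hL2 : MemLp (fun y => g y / y ^ (m + 1)) 2 (volume.restrict (Ioi 0)))
    (hL2' : MemLp (fun y => g' y / y ^ m) 2 (volume.restrict (Ioi 0))) :
    weightedNorm g (m + 1) ≤ 2 * weightedNorm g' m := by
  have hibp := integral_Ioi_deriv_mul_div_pow hg hg h0
    (integrableOn_mul_div_pow hL2' hL2 (by omega)) (integrableOn_mul_div_pow hL2 hL2' (by omega))
    (integrableOn_mul_div_pow hL2 hL2 (by omega))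
  rw [integral_mul_self_div_pow (p := m + 1) (by omega)] at hibp
  have h1 := abs_integral_mul_div_pow_le hL2' hL2 (k := 2 * m + 1) (by omega)
  have h2 := abs_integral_mul_div_pow_le hL2 hL2' (k := 2 * m + 1) (by omega)
  have hN := weightedNorm_nonneg g (m + 1)
  have hN' := weightedNorm_nonneg g' m
  push_cast at hibp
  nlinarith [abs_le.mp h1, abs_le.mp h2]

theorem weightedNorm_sq_le_mul {g₀ g₁ g₂ : ℝ → ℝ} {m : ℕ}
    (h₀ : ∀ y ∈ Ioi (0 : ℝ), HasDerivAt g₀ (g₁ y) y)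
    (h₁ : ∀ y ∈ Ioi (0 : ℝ), HasDerivAt g₁ (g₂ y) y)
    (hb₀ : Tendsto (fun y => g₀ y * g₁ y / y ^ (2 * m + 2)) (𝓝[>] 0) (𝓝 0))
    (hb₁ : Tendsto (fun y => g₁ y * g₁ y / y ^ (2 * m + 1)) (𝓝[>] 0) (𝓝 0))
    (hL2₀ : MemLp (fun y => g₀ y / y ^ (m + 2)) 2 (volume.restrict (Ioi 0)))
    (hL2₁ : MemLp (fun y => g₁ y / y ^ (m + 1)) 2 (volume.restrict (Ioi 0)))
    (hL2₂ : MemLp (fun y => g₂ y / y ^ m) 2 (volume.restrict (Ioi 0))) :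
    weightedNorm g₁ (m + 1) ^ 2 ≤ (4 * m + 5) * (weightedNorm g₀ (m + 2) * weightedNorm g₂ m) := by
  have hibp := integral_Ioi_deriv_mul_div_pow h₀ h₁ hb₀
    (integrableOn_mul_div_pow hL2₁ hL2₁ (by omega))
    (integrableOn_mul_div_pow hL2₀ hL2₂ (by omega))
    (integrableOn_mul_div_pow hL2₀ hL2₁ (by omega))
  rw [integral_mul_self_div_pow (p := m + 1) (by omega)] at hibp
  have h02 := abs_integral_mul_div_pow_le hL2₀ hL2₂ (k := 2 * m + 2) (by omega)
  have h01 := abs_integral_mul_div_pow_le hL2₀ hL2₁ (k := 2 * m + 2 + 1) (by omega)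
  have hardy := weightedNorm_succ_le_two_mul h₁ hb₁ hL2₁ hL2₂
  have hN₀ := weightedNorm_nonneg g₀ (m + 2)
  have hN₁ := weightedNorm_nonneg g₁ (m + 1)
  push_cast at hibp
  nlinarith [abs_le.mp h02, abs_le.mp h01, mul_le_mul_of_nonneg_left hardy hN₀]

theorem ContDiff.hasDerivAt_iteratedDeriv {𝕜 F : Type*} [NontriviallyNormedField 𝕜]
    [NormedAddCommGroup F] [NormedSpace 𝕜 F] {n : WithTop ℕ∞} {f : 𝕜 → F} (hf : ContDiff 𝕜 n f)
    {j : ℕ} (hj : j < n) (x : 𝕜) :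
    HasDerivAt (iteratedDeriv j f) (iteratedDeriv (j + 1) f x) x := by
  rw [iteratedDeriv_succ]
  exact (hf.differentiable_iteratedDeriv j hj x).hasDerivAt

theorem abs_le_mul_pow_succ_of_abs_deriv_le {g g' : ℝ → ℝ} {M : ℝ} {k : ℕ} (hM : 0 ≤ M)
    (hg : ∀ t, HasDerivAt g (g' t) t) (hg0 : g 0 = 0)
    (hg' : ∀ t ∈ Icc (0 : ℝ) 1, |g' t| ≤ M * t ^ k) {y : ℝ} (hy : y ∈ Icc (0 : ℝ) 1) :
    |g y| ≤ M * y ^ (k + 1) := by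
  have hmvt := (convex_Icc 0 y).norm_image_sub_le_of_norm_hasDerivWithin_le
    (fun t _ => (hg t).hasDerivWithinAt) (fun t ht => (hg' t ⟨ht.1, ht.2.trans hy.2⟩).trans
      (mul_le_mul_of_nonneg_left (pow_le_pow_left₀ ht.1 ht.2 k) hM))
    (left_mem_Icc.2 hy.1) (right_mem_Icc.2 hy.1)
  rwa [hg0, sub_zero, sub_zero, Real.norm_eq_abs, Real.norm_of_nonneg hy.1, mul_assoc,
    ← pow_succ] at hmvt

theorem exists_abs_iteratedDeriv_le_mul_pow {n : ℕ} {f : ℝ → ℝ} (hf : ContDiff ℝ n f)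
    (hzero : ∀ j < n, iteratedDeriv j f 0 = 0) :
    ∃ M, ∀ j k, j + k = n → ∀ y ∈ Icc (0 : ℝ) 1, |iteratedDeriv j f y| ≤ M * y ^ k := by
  obtain ⟨C, hC⟩ := isCompact_Icc.exists_bound_of_continuousOn
    (hf.continuous_iteratedDeriv n le_rfl).continuousOn (s := Icc (0 : ℝ) 1)
  refine ⟨max C 0, fun j k hjk => ?_⟩
  induction k generalizing j with
  | zero =>
    subst hjk
    simpa using fun y hy => (hC y hy).trans (le_max_left C 0)
  | succ k ih =>
    exact fun y hy => abs_le_mul_pow_succ_of_abs_deriv_le (le_max_right C 0)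
      (hf.hasDerivAt_iteratedDeriv (by exact_mod_cast (by omega : j < n)))
      (hzero j (by omega)) (ih (j + 1) (by omega)) hy

theorem memLp_div_pow_of_abs_le {u : ℝ → ℝ} {M : ℝ} {k : ℕ}
    (hu : MemLp u 2 (volume.restrict (Ioi 0))) (hbound : ∀ y ∈ Ioc (0 : ℝ) 1, |u y| ≤ M * y ^ k) :
    MemLp (fun y => u y / y ^ k) 2 (volume.restrict (Ioi 0)) := by
  have hmeas : AEStronglyMeasurable (fun y => u y / y ^ k) (volume.restrict (Ioi 0)) :=
    (hu.1.aemeasurable.div (measurable_id.pow_const k).aemeasurable).aestronglyMeasurable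
  rw [memLp_two_iff_integrable_sq hmeas, ← IntegrableOn, ← Ioc_union_Ioi_eq_Ioi zero_le_one]
  refine IntegrableOn.union ?_ ?_
  · refine IntegrableOn.of_bound measure_Ioc_lt_top
      ((hmeas.mono_set Ioc_subset_Ioi_self).pow 2) (M ^ 2) ?_
    filter_upwards [ae_restrict_mem measurableSet_Ioc] with y hy
    have hyk : 0 < y ^ k := pow_pos hy.1 k
    rw [Real.norm_of_nonneg (sq_nonneg _), ← sq_abs, abs_div, abs_of_pos hyk]
    exact pow_le_pow_left₀ (by positivity) ((div_le_iff₀ hyk).2 (hbound y hy)) 2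
  · refine (IntegrableOn.mono_set hu.integrable_sq (Ioi_subset_Ioi zero_le_one)).mono'
      ((hmeas.mono_set (Ioi_subset_Ioi zero_le_one)).pow 2) ?_
    filter_upwards [ae_restrict_mem measurableSet_Ioi] with y (hy : 1 < y)
    rw [Real.norm_of_nonneg (sq_nonneg _), ← sq_abs, ← sq_abs (u y), abs_div,
      abs_of_pos (pow_pos (zero_lt_one.trans hy) k)]
    exact pow_le_pow_left₀ (by positivity) (div_le_self (abs_nonneg _) (one_le_pow₀ hy.le)) 2

theorem tendsto_mul_div_pow_nhdsGT_zero {u v : ℝ → ℝ} {M : ℝ} {p q k : ℕ} (hk : k < p + q)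
    (hu : ∀ y ∈ Ioc (0 : ℝ) 1, |u y| ≤ M * y ^ p) (hv : ∀ y ∈ Ioc (0 : ℝ) 1, |v y| ≤ M * y ^ q) :
    Tendsto (fun y => u y * v y / y ^ k) (𝓝[>] 0) (𝓝 0) := by
  have hlin : Tendsto (fun y : ℝ => M ^ 2 * y) (𝓝[>] 0) (𝓝 0) := by
    simpa using ((continuous_const_mul (M ^ 2)).tendsto 0).mono_left nhdsWithin_le_nhds
  refine squeeze_zero_norm' ?_ hlin
  filter_upwards [Ioc_mem_nhdsGT zero_lt_one] with y hy
  have hyk : 0 < y ^ k := pow_pos hy.1 k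
  calc ‖u y * v y / y ^ k‖ = |u y| * |v y| / y ^ k := by
        rw [Real.norm_eq_abs, abs_div, abs_mul, abs_of_pos hyk]
    _ ≤ M * y ^ p * (M * y ^ q) / y ^ k := by
        exact div_le_div_of_nonneg_right
          (mul_le_mul (hu y hy) (hv y hy) (abs_nonneg _) ((abs_nonneg _).trans (hu y hy))) hyk.le
    _ = M ^ 2 * y ^ (p + q - k) := by
        rw [pow_sub₀ _ hy.1.ne' hk.le, pow_add]; ring
    _ ≤ M ^ 2 * y := by
        gcongr
        exact pow_le_of_le_one hy.1.le hy.2 (by omega)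

theorem weightedNorm_iteratedDeriv_sq_le {n : ℕ} {f : ℝ → ℝ} (hf : ContDiff ℝ n f) {M : ℝ}
    (hM : ∀ j k, j + k = n → ∀ y ∈ Ioc (0 : ℝ) 1, |iteratedDeriv j f y| ≤ M * y ^ k)
    (hL2 : ∀ j k, j + k = n →
      MemLp (fun y => iteratedDeriv j f y / y ^ k) 2 (volume.restrict (Ioi 0)))
    {j : ℕ} (hj : j + 2 ≤ n) :
    weightedNorm (iteratedDeriv (j + 1) f) (n - (j + 1)) ^ 2 ≤ (4 * n + 1) *
      (weightedNorm (iteratedDeriv j f) (n - j) *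
        weightedNorm (iteratedDeriv (j + 2) f) (n - (j + 2))) := by
  obtain ⟨m, rfl⟩ : ∃ m, n = j + 2 + m := ⟨n - (j + 2), by omega⟩
  rw [show j + 2 + m - j = m + 2 by omega, show j + 2 + m - (j + 1) = m + 1 by omega,
    show j + 2 + m - (j + 2) = m by omega]
  have hd₀ := hf.hasDerivAt_iteratedDeriv (j := j) (mod_cast (by omega : j < j + 2 + m))
  have hd₁ := hf.hasDerivAt_iteratedDeriv (j := j + 1) (mod_cast (by omega : j + 1 < j + 2 + m))
  refine (weightedNorm_sq_le_mul (fun y _ => hd₀ y) (fun y _ => hd₁ y)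
    (tendsto_mul_div_pow_nhdsGT_zero (p := m + 2) (q := m + 1) (by omega) (hM j _ (by omega))
      (hM (j + 1) _ (by omega)))
    (tendsto_mul_div_pow_nhdsGT_zero (p := m + 1) (q := m + 1) (by omega)
      (hM (j + 1) _ (by omega)) (hM (j + 1) _ (by omega)))
    (hL2 j _ (by omega)) (hL2 (j + 1) _ (by omega)) (hL2 (j + 2) _ (by omega))).trans
    (mul_le_mul_of_nonneg_right (by push_cast; linarith)
      (mul_nonneg (weightedNorm_nonneg _ _) (weightedNorm_nonneg _ _)))

theorem stmt19_general (n i : ℕ) (hin : i < n)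
    (ystar : ℝ) (hystar : 0 < ystar) :
    ∃ C : ℝ, 0 < C ∧ ∀ f : ℝ → ℝ, ContDiff ℝ n f →
      (∀ j ≤ n, MemLp (iteratedDeriv j f) 2 (volume.restrict (Set.Ioi (0:ℝ)))) →
      (∀ j < n, iteratedDeriv j f 0 = 0) →
      (∫ y in Set.Ioi ystar, (iteratedDeriv i f y / y ^ (n - i)) ^ 2) ^ ((1:ℝ)/2)
        ≤ C * ((∫ y in Set.Ioi (0:ℝ), (f y / y ^ n) ^ 2) ^ ((1:ℝ)/2))
                ^ (1 - (i : ℝ) / (n : ℝ))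
            * ((∫ y in Set.Ioi (0:ℝ), (iteratedDeriv n f y) ^ 2) ^ ((1:ℝ)/2))
                ^ ((i : ℝ) / (n : ℝ)) := by
  refine ⟨(4 * n + 1) ^ (n * n), by positivity, fun f hf hL2 hzero => ?_⟩
  obtain ⟨M, hM⟩ := exists_abs_iteratedDeriv_le_mul_pow hf hzero
  have hM' : ∀ j k, j + k = n → ∀ y ∈ Ioc (0 : ℝ) 1, |iteratedDeriv j f y| ≤ M * y ^ k :=
    fun j k hjk y hy => hM j k hjk y (Ioc_subset_Icc_self hy)
  have hmem : ∀ j k, j + k = n → MemLp (fun y => iteratedDeriv j f y / y ^ k) 2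
      (volume.restrict (Ioi 0)) :=
    fun j k hjk => memLp_div_pow_of_abs_le (hL2 j (by omega)) (hM' j k hjk)
  have hinterp := le_interpolate_of_sq_le_mul (by linarith : (1 : ℝ) ≤ 4 * n + 1)
    (q := fun j => weightedNorm (iteratedDeriv j f) (n - j)) (fun j _ => weightedNorm_nonneg _ _)
    (fun j hj => weightedNorm_iteratedDeriv_sq_le hf hM' hmem hj) hin.le
  have hrestrict : (∫ y in Ioi ystar, (iteratedDeriv i f y / y ^ (n - i)) ^ 2) ^ ((1 : ℝ) / 2)
      ≤ (∫ y in Ioi 0, (iteratedDeriv i f y / y ^ (n - i)) ^ 2) ^ ((1 : ℝ) / 2) :=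
    Real.rpow_le_rpow (setIntegral_nonneg measurableSet_Ioi fun y _ => sq_nonneg _)
      (setIntegral_mono_set (hmem i (n - i) (by omega)).integrable_sq
        (Eventually.of_forall fun y => sq_nonneg _) (Ioi_subset_Ioi hystar.le).eventuallyLE)
      (by norm_num)
  simp only [weightedNorm, iteratedDeriv_zero, Nat.sub_zero, Nat.sub_self, pow_zero, div_one,
    Real.sqrt_eq_rpow] at hinterp
  exact hrestrict.trans hinterp

/-- weighted Gagliardo–Nirenberg interpolation away from the origin. -/
theorem stmt19 (n i : ℕ) (hn : 2 ≤ n) (hi1 : 1 ≤ i) (hin : i < n)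
    (ystar : ℝ) (hystar : 0 < ystar) :
    ∃ C : ℝ, 0 < C ∧ ∀ f : ℝ → ℝ, ContDiff ℝ n f →
      (∀ j ≤ n, MemLp (iteratedDeriv j f) 2 (volume.restrict (Set.Ioi (0:ℝ)))) →
      (∀ j < n, iteratedDeriv j f 0 = 0) →
      (∫ y in Set.Ioi ystar, (iteratedDeriv i f y / y ^ (n - i)) ^ 2) ^ ((1:ℝ)/2)
        ≤ C * ((∫ y in Set.Ioi (0:ℝ), (f y / y ^ n) ^ 2) ^ ((1:ℝ)/2))
                ^ (1 - (i : ℝ) / (n : ℝ))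
            * ((∫ y in Set.Ioi (0:ℝ), (iteratedDeriv n f y) ^ 2) ^ ((1:ℝ)/2))
                ^ ((i : ℝ) / (n : ℝ)) :=
  stmt19_general n i hin ystar hystar
end
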